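/- Discrete Korn inequality with plasticity: there exists a constant C < ∞, depending only on d and λ_A, such that for every ε > 0, every u: εℤ^d → ℝ^d vanishing outside Q_ε and every z: εℤ^d → ℝ^{d×d} with symmetric values vanishing outside Q_ε, one has ε^d Σ_{x ∈ εℤ^d} |∇_ε u(x)|² ≤ C · E^loc_ε(u,z). -/
import Mathlib


/-!
**STATEMENT 5 (Discrete Korn inequality with plasticity).**
There exists `C < ∞`, depending only on `d` and `λ_A`, such that for every `ε > 0`,
every `u : εℤ^d → ℝ^d` vanishing outside `Q_ε` and every `z : εℤ^d → ℝ^{d×d}` with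
symmetric values vanishing outside `Q_ε`, one has
`ε^d Σ_{x∈εℤ^d} |∇_ε u(x)|² ≤ C · E^loc_ε(u,z)`,
where `E^loc_ε(u,z) = ε^d Σ_x [(∇^s_ε u−z):A:(∇^s_ε u−z) + z:H:z + κ|∇_ε z|²]`,
`A, H` are fields of symmetric fourth-order tensors with `λ_A|M|² ≤ M:A(x):M`,
`λ_H|M|² ≤ M:H(x):M`, `0 < λ_A < λ_H`, `κ > 0`.

Lattice functions are indexed by `ℤ^d` (the lattice point `z` sits at `ε·z`);
fourth-order tensors are modelled as linear maps on `d×d` matrices.  `Q` is a bounded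
nonempty open set (boundary Lipschitz regularity is not formalizable in current
Mathlib and is irrelevant for this inequality).
-/

noncomputable section

def latticePos {d : ℕ} (ε : ℝ) (z : Fin d → ℤ) : Fin d → ℝ := fun i => ε * (z i : ℝ)

def dgradM {d : ℕ} (ε : ℝ) (u : (Fin d → ℤ) → (Fin d → ℝ)) (z : Fin d → ℤ) :
    Fin d → Fin d → ℝ :=
  fun i j => (u (z + Pi.single j 1) i - u z i) / ε

def symPart {d : ℕ} (M : Fin d → Fin d → ℝ) : Fin d → Fin d → ℝ :=
  fun i j => (M i j + M j i) / 2

def frobSq {d : ℕ} (M : Fin d → Fin d → ℝ) : ℝ := ∑ i, ∑ j, (M i j) ^ 2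

/-- Full contraction `M : N` of two `d×d` matrices. -/
def mcon {d : ℕ} (M N : Fin d → Fin d → ℝ) : ℝ := ∑ i, ∑ j, M i j * N i j

/-- Squared Frobenius norm `|∇_ε z|²` of the discrete gradient of a matrix field. -/
def dgradMSq {d : ℕ} (ε : ℝ) (P : (Fin d → ℤ) → (Fin d → Fin d → ℝ)) (z : Fin d → ℤ) : ℝ :=
  ∑ k, frobSq (ε⁻¹ • (P (z + Pi.single k 1) - P z))

/-- Discrete local elastoplastic energy `E^loc_ε(u,z)`. -/
def ElocEps {d : ℕ} (ε : ℝ)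
    (A H : (Fin d → ℤ) → (Fin d → Fin d → ℝ) →ₗ[ℝ] (Fin d → Fin d → ℝ)) (κ : ℝ)
    (u : (Fin d → ℤ) → (Fin d → ℝ)) (P : (Fin d → ℤ) → (Fin d → Fin d → ℝ)) : ℝ :=
  ε ^ d * ∑' z : Fin d → ℤ,
    (mcon (symPart (dgradM ε u z) - P z) (A z (symPart (dgradM ε u z) - P z))
      + mcon (P z) (H z (P z)) + κ * dgradMSq ε P z)

namespace KornAux

variable {d : ℕ}

lemma summable_fs {f : (Fin d → ℤ) → ℝ} (h : (Function.support f).Finite) :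
    Summable f :=
  summable_of_ne_finset_zero (s := h.toFinset) fun x hx => by
    by_contra h0
    exact hx (h.mem_toFinset.mpr h0)

lemma tsum_shift (f : (Fin d → ℤ) → ℝ) (v : Fin d → ℤ) :
    ∑' x, f (x + v) = ∑' x, f x :=
  (Equiv.addRight v).tsum_eq f

lemma fs_shift {f : (Fin d → ℤ) → ℝ} (h : (Function.support f).Finite) (v : Fin d → ℤ) :
    (Function.support fun x => f (x + v)).Finite := by
  refine (h.image (fun x => x - v)).subset ?_
  intro x hx
  exact ⟨x + v, hx, add_sub_cancel_right x v⟩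

lemma fs_shift_sub {f : (Fin d → ℤ) → ℝ} (h : (Function.support f).Finite) (v : Fin d → ℤ) :
    (Function.support fun x => f (x - v)).Finite := by
  simpa [sub_eq_add_neg] using fs_shift h (-v)

lemma summable_mul_left {f g : (Fin d → ℤ) → ℝ} (h : (Function.support f).Finite) :
    Summable fun x => f x * g x :=
  summable_fs (h.subset fun _ hx => left_ne_zero_of_mul hx)

/-- Discrete double integration by parts. -/
lemma cross_tsum (f g : (Fin d → ℤ) → ℝ)
    (hf : (Function.support f).Finite) (hg : (Function.support g).Finite)
    (v w : Fin d → ℤ) :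
    ∑' x, (f (x + v) - f x) * (g (x + w) - g x)
      = ∑' x, (f x - f (x - w)) * (g x - g (x - v)) := by
  have S1 : Summable fun x => f (x + v) * g (x + w) := summable_mul_left (fs_shift hf v)
  have S2 : Summable fun x => f (x + v) * g x := summable_mul_left (fs_shift hf v)
  have S3 : Summable fun x => f x * g (x + w) := summable_mul_left hf
  have S4 : Summable fun x => f x * g x := summable_mul_left hf
  have S5 : Summable fun x => f x * g (x - v) := summable_mul_left hf
  have S6 : Summable fun x => f (x - w) * g x := summable_mul_left (fs_shift_sub hf w)
  have S7 : Summable fun x => f (x - w) * g (x - v) := summable_mul_left (fs_shift_sub hf w)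
  have h1 : ∑' x, f (x + v) * g (x + w) = ∑' x, f (x + v - w) * g x := by
    rw [← tsum_shift (fun y => f (y + v - w) * g y) w]
    exact tsum_congr fun x => by rw [show x + w + v - w = x + v by rw [add_right_comm, add_sub_cancel_right]]
  have h2 : ∑' x, f x * g (x - v) = ∑' x, f (x + v) * g x := by
    rw [← tsum_shift (fun y => f y * g (y - v)) v]
    exact tsum_congr fun x => by rw [add_sub_cancel_right]
  have h3 : ∑' x, f (x - w) * g x = ∑' x, f x * g (x + w) := by
    rw [← tsum_shift (fun y => f (y - w) * g y) w]
    exact tsum_congr fun x => by rw [add_sub_cancel_right]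
  have h4 : ∑' x, f (x - w) * g (x - v) = ∑' x, f (x + v - w) * g x := by
    rw [← tsum_shift (fun y => f (y - w) * g (y - v)) v]
    exact tsum_congr fun x => by rw [add_sub_cancel_right]
  have eL : ∑' x, (f (x + v) - f x) * (g (x + w) - g x)
      = ((∑' x, f (x + v) * g (x + w)) - ∑' x, f (x + v) * g x)
        - ((∑' x, f x * g (x + w)) - ∑' x, f x * g x) := by
    rw [← Summable.tsum_sub S1 S2, ← Summable.tsum_sub S3 S4, ← Summable.tsum_sub (S1.sub S2) (S3.sub S4)]
    exact tsum_congr fun x => by ring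
  have eR : ∑' x, (f x - f (x - w)) * (g x - g (x - v))
      = ((∑' x, f x * g x) - ∑' x, f x * g (x - v))
        - ((∑' x, f (x - w) * g x) - ∑' x, f (x - w) * g (x - v)) := by
    rw [← Summable.tsum_sub S4 S5, ← Summable.tsum_sub S6 S7, ← Summable.tsum_sub (S4.sub S5) (S6.sub S7)]
    exact tsum_congr fun x => by ring
  rw [eL, eR, h1, h2, h3, h4]
  ring

lemma frobSq_nonneg (M : Fin d → Fin d → ℝ) : 0 ≤ frobSq M :=
  Finset.sum_nonneg fun _ _ => Finset.sum_nonneg fun _ _ => sq_nonneg _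

lemma two_frobSq_symPart (N : Fin d → Fin d → ℝ) :
    2 * frobSq (symPart N) = frobSq N + ∑ i, ∑ j, N i j * N j i := by
  have e1 : 2 * frobSq (symPart N)
      = ∑ i, ∑ j, ((N i j) ^ 2 / 2 + (N j i) ^ 2 / 2 + N i j * N j i) := by
    unfold frobSq symPart
    rw [Finset.mul_sum]
    refine Finset.sum_congr rfl fun i _ => ?_
    rw [Finset.mul_sum]
    exact Finset.sum_congr rfl fun j _ => by ring
  have e2 : ∑ i, ∑ j, ((N i j) ^ 2 / 2 + (N j i) ^ 2 / 2 + N i j * N j i)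
      = ((∑ i, ∑ j, (N i j) ^ 2 / 2) + ∑ i, ∑ j, (N j i) ^ 2 / 2)
        + ∑ i, ∑ j, N i j * N j i := by
    rw [← Finset.sum_add_distrib, ← Finset.sum_add_distrib]
    refine Finset.sum_congr rfl fun i _ => ?_
    rw [← Finset.sum_add_distrib, ← Finset.sum_add_distrib]
  have e3 : ∑ i, ∑ j, ((N j i) ^ 2 / 2 : ℝ) = ∑ i, ∑ j, (N i j) ^ 2 / 2 :=
    Finset.sum_comm
  have e4 : ((∑ i, ∑ j, ((N i j) ^ 2 / 2 : ℝ)) + ∑ i, ∑ j, (N i j) ^ 2 / 2) = frobSq N := by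
    unfold frobSq
    rw [← Finset.sum_add_distrib]
    refine Finset.sum_congr rfl fun i _ => ?_
    rw [← Finset.sum_add_distrib]
    exact Finset.sum_congr rfl fun j _ => by ring
  rw [e1, e2, e3, e4]

lemma frobSq_le_two (X Y : Fin d → Fin d → ℝ) :
    frobSq X ≤ 2 * frobSq (X - Y) + 2 * frobSq Y := by
  have key : ∀ i j, (X i j) ^ 2 ≤ 2 * ((X - Y) i j) ^ 2 + 2 * (Y i j) ^ 2 := by
    intro i j
    simp only [Pi.sub_apply]
    nlinarith [sq_nonneg (X i j - 2 * Y i j)]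
  calc frobSq X ≤ ∑ i, ∑ j, (2 * ((X - Y) i j) ^ 2 + 2 * (Y i j) ^ 2) :=
        Finset.sum_le_sum fun i _ => Finset.sum_le_sum fun j _ => key i j
    _ = 2 * frobSq (X - Y) + 2 * frobSq Y := by
        unfold frobSq
        rw [Finset.mul_sum, Finset.mul_sum, ← Finset.sum_add_distrib]
        refine Finset.sum_congr rfl fun i _ => ?_
        rw [Finset.mul_sum, Finset.mul_sum, ← Finset.sum_add_distrib]

end KornAux

open KornAux

theorem discrete_korn_inequality_with_plasticity
    (d : ℕ) (hd : 1 ≤ d) (lamA : ℝ) (hlamA : 0 < lamA) :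
    ∃ C : ℝ, ∀ (Q : Set (Fin d → ℝ)), IsOpen Q → Q.Nonempty → Bornology.IsBounded Q →
      ∀ (lamH κ : ℝ), lamA < lamH → 0 < κ →
      ∀ (A H : (Fin d → ℤ) → (Fin d → Fin d → ℝ) →ₗ[ℝ] (Fin d → Fin d → ℝ)),
        (∀ z M N, mcon M (A z N) = mcon N (A z M)) →
        (∀ z M N, mcon M (H z N) = mcon N (H z M)) →
        (∀ z M, lamA * frobSq M ≤ mcon M (A z M)) →
        (∀ z M, lamH * frobSq M ≤ mcon M (H z M)) →
      ∀ ε : ℝ, 0 < ε →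
      ∀ (u : (Fin d → ℤ) → (Fin d → ℝ)) (P : (Fin d → ℤ) → (Fin d → Fin d → ℝ)),
        (∀ z : Fin d → ℤ, latticePos ε z ∉ Q → u z = 0) →
        (∀ z : Fin d → ℤ, ∀ i j, P z i j = P z j i) →
        (∀ z : Fin d → ℤ, latticePos ε z ∉ Q → P z = 0) →
        ε ^ d * ∑' z : Fin d → ℤ, frobSq (dgradM ε u z) ≤ C * ElocEps ε A H κ u P := by
  refine ⟨4 / lamA, ?_⟩
  intro Q hQo hQne hQb lamH κ hlt hκ A H hAs hHs hAel hHel ε hε u P hu hPs hP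
  -- finiteness of the set of lattice points in Q
  have hSQ : {z : Fin d → ℤ | latticePos ε z ∈ Q}.Finite := by
    obtain ⟨R, hR⟩ := hQb.subset_closedBall 0
    refine (Set.Finite.pi (fun i : Fin d => Set.finite_Icc (-⌈R / ε⌉) ⌈R / ε⌉)).subset ?_
    intro z hz i _
    have h1 : |ε * (z i : ℝ)| ≤ R := by
      have hz' : ‖latticePos ε z‖ ≤ R := by
        simpa [dist_zero_right] using Metric.mem_closedBall.mp (hR hz)
      calc |ε * (z i : ℝ)| = ‖latticePos ε z i‖ := by simp [latticePos, abs_mul, abs_of_pos hε]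
        _ ≤ ‖latticePos ε z‖ := norm_le_pi_norm _ i
        _ ≤ R := hz'
    have h2 : |(z i : ℝ)| ≤ R / ε := by
      rw [le_div_iff₀ hε, mul_comm]
      calc ε * |(z i : ℝ)| = |ε * (z i : ℝ)| := by
            rw [abs_mul, abs_of_pos hε]
        _ ≤ R := h1
    have h4 : |z i| ≤ ⌈R / ε⌉ := by
      have h3 : (|z i| : ℝ) ≤ (⌈R / ε⌉ : ℝ) := by
        push_cast
        exact h2.trans (Int.le_ceil _)
      exact_mod_cast h3
    simpa [Set.mem_Icc] using abs_le.mp h4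
  have hufin : (Function.support u).Finite := hSQ.subset (by
    intro x hx
    by_contra hq
    exact hx (hu x hq))
  have hPfin : (Function.support P).Finite := hSQ.subset (by
    intro x hx
    by_contra hq
    exact hx (hP x hq))
  set S : Set (Fin d → ℤ) := Function.support u ∪ Function.support P with hSdef
  have hSfin : S.Finite := hufin.union hPfin
  set W : Set (Fin d → ℤ) := S ∪ (⋃ j : Fin d, (fun x => x - Pi.single j 1) '' S)
      ∪ (⋃ j : Fin d, (fun x => x + Pi.single j 1) '' S) with hWdef
  have hWfin : W.Finite :=
    (hSfin.union (Set.finite_iUnion fun j => hSfin.image _)).union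
      (Set.finite_iUnion fun j => hSfin.image _)
  -- vanishing outside W
  have hu0 : ∀ x ∉ W, u x = 0 := by
    intro x hx
    by_contra h0
    exact hx (Or.inl (Or.inl (Or.inl h0)))
  have hP0 : ∀ x ∉ W, P x = 0 := by
    intro x hx
    by_contra h0
    exact hx (Or.inl (Or.inl (Or.inr h0)))
  have huS : ∀ x ∉ W, ∀ j, u (x + Pi.single j 1) = 0 := by
    intro x hx j
    by_contra h0
    exact hx (Or.inl (Or.inr (Set.mem_iUnion.mpr
      ⟨j, ⟨x + Pi.single j 1, Or.inl h0, add_sub_cancel_right x _⟩⟩)))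
  have huSm : ∀ x ∉ W, ∀ j, u (x - Pi.single j 1) = 0 := by
    intro x hx j
    by_contra h0
    exact hx (Or.inr (Set.mem_iUnion.mpr
      ⟨j, ⟨x - Pi.single j 1, Or.inl h0, sub_add_cancel x _⟩⟩))
  have hPS : ∀ x ∉ W, ∀ j, P (x + Pi.single j 1) = 0 := by
    intro x hx j
    by_contra h0
    exact hx (Or.inl (Or.inr (Set.mem_iUnion.mpr
      ⟨j, ⟨x + Pi.single j 1, Or.inr h0, add_sub_cancel_right x _⟩⟩)))
  have hG0 : ∀ x ∉ W, ∀ i j, dgradM ε u x i j = 0 := by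
    intro x hx i j
    simp [dgradM, hu0 x hx, huS x hx j]
  -- backward divergence components
  set bb : Fin d → (Fin d → ℤ) → ℝ :=
    fun i x => (u x i - u (x - Pi.single i 1) i) / ε with hbbdef
  have hbb0 : ∀ x ∉ W, ∀ i, bb i x = 0 := by
    intro x hx i
    simp [hbbdef, hu0 x hx, huSm x hx i]
  -- summability
  have sum_frobG : Summable (fun x => frobSq (dgradM ε u x)) :=
    summable_fs (hWfin.subset fun x hx => by
      by_contra hxW
      exact hx (by simp [frobSq, hG0 x hxW]))
  have sum_Sy : Summable (fun x => frobSq (symPart (dgradM ε u x))) :=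
    summable_fs (hWfin.subset fun x hx => by
      by_contra hxW
      exact hx (by simp [frobSq, symPart, hG0 x hxW]))
  have sum_crossij : ∀ i j : Fin d,
      Summable fun x => dgradM ε u x i j * dgradM ε u x j i := fun i j =>
    summable_fs (hWfin.subset fun x hx => by
      by_contra hxW
      exact hx (by simp [hG0 x hxW]))
  have sum_crossi : ∀ i : Fin d,
      Summable fun x => ∑ j, dgradM ε u x i j * dgradM ε u x j i := fun i =>
    summable_fs (hWfin.subset fun x hx => by
      by_contra hxW
      exact hx (by simp [hG0 x hxW]))
  have sum_cross : Summable fun x => ∑ i, ∑ j, dgradM ε u x i j * dgradM ε u x j i :=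
    summable_fs (hWfin.subset fun x hx => by
      by_contra hxW
      exact hx (by simp [hG0 x hxW]))
  have sum_bbij : ∀ i j : Fin d, Summable fun x => bb i x * bb j x := fun i j =>
    summable_fs (hWfin.subset fun x hx => by
      by_contra hxW
      exact hx (by simp [hbb0 x hxW]))
  have sum_bbi : ∀ i : Fin d, Summable fun x => ∑ j, bb i x * bb j x := fun i =>
    summable_fs (hWfin.subset fun x hx => by
      by_contra hxW
      exact hx (by simp [hbb0 x hxW]))
  -- per-pair integration by parts
  have pair : ∀ i j : Fin d, ∑' x, dgradM ε u x i j * dgradM ε u x j i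
      = ∑' x, bb i x * bb j x := by
    intro i j
    have hfi : (Function.support fun x => u x i).Finite :=
      hufin.subset (by
        intro x hx
        simp only [Function.mem_support] at hx ⊢
        intro h0
        exact hx (by rw [h0]; simp))
    have hfj : (Function.support fun x => u x j).Finite :=
      hufin.subset (by
        intro x hx
        simp only [Function.mem_support] at hx ⊢
        intro h0
        exact hx (by rw [h0]; simp))
    have lhs : ∑' x, dgradM ε u x i j * dgradM ε u x j i
        = ε⁻¹ * (ε⁻¹ * ∑' x, ((u (x + Pi.single j 1) i - u x i)
            * (u (x + Pi.single i 1) j - u x j))) := by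
      rw [← tsum_mul_left, ← tsum_mul_left]
      exact tsum_congr fun x => by simp only [dgradM]; ring
    have rhs : ∑' x, bb i x * bb j x
        = ε⁻¹ * (ε⁻¹ * ∑' x, ((u x i - u (x - Pi.single i 1) i)
            * (u x j - u (x - Pi.single j 1) j))) := by
      rw [← tsum_mul_left, ← tsum_mul_left]
      exact tsum_congr fun x => by simp only [hbbdef]; ring
    rw [lhs, rhs,
      cross_tsum (fun y => u y i) (fun y => u y j) hfi hfj (Pi.single j 1) (Pi.single i 1)]
  -- nonnegativity of the cross term
  have hcross_eq : ∑' x, ∑ i, ∑ j, dgradM ε u x i j * dgradM ε u x j i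
      = ∑' x, (∑ i, bb i x) ^ 2 := by
    calc ∑' x, ∑ i, ∑ j, dgradM ε u x i j * dgradM ε u x j i
        = ∑ i, ∑' x, ∑ j, dgradM ε u x i j * dgradM ε u x j i :=
          Summable.tsum_finsetSum fun i _ => sum_crossi i
      _ = ∑ i, ∑ j, ∑' x, dgradM ε u x i j * dgradM ε u x j i :=
          Finset.sum_congr rfl fun i _ => Summable.tsum_finsetSum fun j _ => sum_crossij i j
      _ = ∑ i, ∑ j, ∑' x, bb i x * bb j x :=
          Finset.sum_congr rfl fun i _ => Finset.sum_congr rfl fun j _ => pair i j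
      _ = ∑ i, ∑' x, ∑ j, bb i x * bb j x :=
          Finset.sum_congr rfl fun i _ => (Summable.tsum_finsetSum fun j _ => sum_bbij i j).symm
      _ = ∑' x, ∑ i, ∑ j, bb i x * bb j x := (Summable.tsum_finsetSum fun i _ => sum_bbi i).symm
      _ = ∑' x, (∑ i, bb i x) ^ 2 :=
          tsum_congr fun x => by rw [sq, Finset.sum_mul_sum]
  have crossnn : 0 ≤ ∑' x, ∑ i, ∑ j, dgradM ε u x i j * dgradM ε u x j i := by
    rw [hcross_eq]
    exact tsum_nonneg fun x => sq_nonneg _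
  -- Korn inequality
  have hsplit : 2 * ∑' x, frobSq (symPart (dgradM ε u x))
      = (∑' x, frobSq (dgradM ε u x))
        + ∑' x, ∑ i, ∑ j, dgradM ε u x i j * dgradM ε u x j i := by
    rw [← tsum_mul_left, ← Summable.tsum_add sum_frobG sum_cross]
    exact tsum_congr fun x => two_frobSq_symPart _
  have korn : ∑' x, frobSq (dgradM ε u x)
      ≤ 2 * ∑' x, frobSq (symPart (dgradM ε u x)) := by linarith
  -- the energy integrand
  set Ifun : (Fin d → ℤ) → ℝ := fun z =>
    mcon (symPart (dgradM ε u z) - P z) (A z (symPart (dgradM ε u z) - P z))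
      + mcon (P z) (H z (P z)) + κ * dgradMSq ε P z with hIdef
  have hI0 : ∀ x ∉ W, Ifun x = 0 := by
    intro x hx
    have hSy : symPart (dgradM ε u x) = 0 := by
      funext i j
      simp [symPart, hG0 x hx]
    simp [hIdef, hSy, hP0 x hx, hPS x hx, mcon, dgradMSq, frobSq]
  have sum_I : Summable Ifun :=
    summable_fs (hWfin.subset fun x hx => by
      by_contra hxW
      exact hx (hI0 x hxW))
  -- pointwise coercivity bound
  have step2 : ∀ x, 2 * frobSq (symPart (dgradM ε u x)) ≤ 4 / lamA * Ifun x := by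
    intro x
    have hfM := frobSq_le_two (symPart (dgradM ε u x)) (P x)
    have hA := hAel x (symPart (dgradM ε u x) - P x)
    have hH := hHel x (P x)
    have hPnn := frobSq_nonneg (P x)
    have hMnn := frobSq_nonneg (symPart (dgradM ε u x) - P x)
    have hHge : lamA * frobSq (P x) ≤ mcon (P x) (H x (P x)) :=
      le_trans (mul_le_mul_of_nonneg_right hlt.le hPnn) hH
    have hκnn : 0 ≤ κ * dgradMSq ε P x :=
      mul_nonneg hκ.le (Finset.sum_nonneg fun k _ => frobSq_nonneg _)
    simp only [hIdef]
    rw [div_mul_eq_mul_div, le_div_iff₀ hlamA]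
    nlinarith [mul_le_mul_of_nonneg_right hfM hlamA.le]
  -- assemble
  have key : ∑' x, frobSq (dgradM ε u x) ≤ 4 / lamA * ∑' x, Ifun x := by
    calc ∑' x, frobSq (dgradM ε u x)
        ≤ 2 * ∑' x, frobSq (symPart (dgradM ε u x)) := korn
      _ = ∑' x, 2 * frobSq (symPart (dgradM ε u x)) := tsum_mul_left.symm
      _ ≤ ∑' x, 4 / lamA * Ifun x :=
          Summable.tsum_le_tsum step2 (sum_Sy.mul_left 2) (sum_I.mul_left _)
      _ = 4 / lamA * ∑' x, Ifun x := tsum_mul_left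
  have hεd : (0 : ℝ) < ε ^ d := pow_pos hε d
  calc ε ^ d * ∑' z, frobSq (dgradM ε u z)
      ≤ ε ^ d * (4 / lamA * ∑' x, Ifun x) := mul_le_mul_of_nonneg_left key hεd.le
    _ = 4 / lamA * ElocEps ε A H κ u P := by
        simp only [ElocEps, hIdef]
        ring
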